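/- Let Π be a projector on ℝ^N (Π² = Π) with Π ≠ 0 and Π ≠ I. If Π is not an orthogonal projector, the operator 2-norm of I - Π equals the operator 2-norm of Π; in particular ‖I - Π‖ = ‖Π‖ holds for any projector Π with 0 ≠ Π ≠ I. -/

import Mathlib

/-!
For `x` put `v = P x` and `w = x - P x`. The test vector `z = ‖v‖² w + ‖w‖² v` satisfies
`P z = ‖w‖² v` and, expanding both squares, `‖z‖ = ‖v‖ ‖w‖ ‖x‖`; so `‖P z‖ ≤ ‖P‖ ‖z‖` gives
`‖w‖ ≤ ‖P‖ ‖x‖`, i.e. `‖1 - P‖ ≤ ‖P‖`. Applying this to the projector `1 - P` gives the reverse.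
-/

theorem IsIdempotentElem.one_le_norm {R : Type*} [NonUnitalNormedRing R] {p : R}
    (hp : IsIdempotentElem p) (h0 : p ≠ 0) : 1 ≤ ‖p‖ := by
  have hpos : 0 < ‖p‖ := norm_pos_iff.mpr h0
  refine (le_mul_iff_one_le_left hpos).mp ?_
  calc ‖p‖ = ‖p * p‖ := by rw [hp.eq]
    _ ≤ ‖p‖ * ‖p‖ := norm_mul_le p p

section InnerProductSpace

variable {𝕜 E : Type*} [RCLike 𝕜] [NormedAddCommGroup E] [InnerProductSpace 𝕜 E]

theorem norm_sq_smul_add_norm_sq_smul (v w : E) :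
    ‖(‖v‖ ^ 2 : 𝕜) • w + (‖w‖ ^ 2 : 𝕜) • v‖ = ‖v‖ * ‖w‖ * ‖w + v‖ := by
  refine (pow_left_inj₀ (norm_nonneg _) (by positivity) two_ne_zero).mp ?_
  rw [mul_pow _ ‖w + v‖, @norm_add_sq 𝕜, @norm_add_sq 𝕜, inner_smul_left, inner_smul_right,
    norm_smul, norm_smul]
  simp only [← RCLike.ofReal_pow, RCLike.norm_ofReal, RCLike.conj_ofReal, ← mul_assoc,
    ← RCLike.ofReal_mul, RCLike.re_ofReal_mul, abs_pow, abs_norm]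
  ring

namespace ContinuousLinearMap

variable {P : E →L[𝕜] E}

theorem norm_sub_apply_le_of_isIdempotentElem (hP : IsIdempotentElem P) (h0 : P ≠ 0) (x : E) :
    ‖x - P x‖ ≤ ‖P‖ * ‖x‖ := by
  have hPv : P (P x) = P x := congr($hP x)
  have hPw : P (x - P x) = 0 := by rw [map_sub, hPv, sub_self]
  rcases eq_or_ne (P x) 0 with hv | hv
  · rw [hv, sub_zero]
    exact le_mul_of_one_le_left (norm_nonneg x) (hP.one_le_norm h0)
  rcases eq_or_ne (x - P x) 0 with hw | hw
  · rw [hw, norm_zero]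
    positivity
  set v := P x
  set w := x - P x
  have hPz : P ((‖v‖ ^ 2 : 𝕜) • w + (‖w‖ ^ 2 : 𝕜) • v) = (‖w‖ ^ 2 : 𝕜) • v := by
    simp [hPv, hPw]
  have hle := P.le_opNorm ((‖v‖ ^ 2 : 𝕜) • w + (‖w‖ ^ 2 : 𝕜) • v)
  rw [hPz, norm_sq_smul_add_norm_sq_smul, sub_add_cancel, norm_smul, norm_pow,
    RCLike.norm_ofReal, abs_norm] at hle
  refine le_of_mul_le_mul_left ?_ (by positivity : 0 < ‖v‖ * ‖w‖)
  linarith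

theorem norm_one_sub_le_of_isIdempotentElem (hP : IsIdempotentElem P) (h0 : P ≠ 0) :
    ‖1 - P‖ ≤ ‖P‖ :=
  opNorm_le_bound _ (norm_nonneg P) (norm_sub_apply_le_of_isIdempotentElem hP h0)

theorem norm_one_sub_eq_of_isIdempotentElem (hP : IsIdempotentElem P) (h0 : P ≠ 0)
    (h1 : P ≠ 1) : ‖1 - P‖ = ‖P‖ := by
  refine le_antisymm (norm_one_sub_le_of_isIdempotentElem hP h0) ?_
  simpa using norm_one_sub_le_of_isIdempotentElem hP.one_sub (sub_ne_zero.mpr h1.symm)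

end ContinuousLinearMap

end InnerProductSpace

open Matrix

theorem stmt5 {N : ℕ} (Pr : Matrix (Fin N) (Fin N) ℝ)
    (hproj : Pr * Pr = Pr) (h0 : Pr ≠ 0) (h1 : Pr ≠ 1) :
    ‖Matrix.toEuclideanCLM (𝕜 := ℝ) (n := Fin N) (1 - Pr)‖ =
      ‖Matrix.toEuclideanCLM (𝕜 := ℝ) (n := Fin N) Pr‖ := by
  rw [map_sub, map_one]
  exact ContinuousLinearMap.norm_one_sub_eq_of_isIdempotentElem (IsIdempotentElem.map hproj _)
    ((map_ne_zero_iff _ (EquivLike.injective _)).mpr h0)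
    ((map_ne_one_iff _ (EquivLike.injective _)).mpr h1)
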